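/- arXiv:2209.02110 — 3 statements merged into one kernel-verified Lean document; each statement's English description precedes it below -/
import Mathlib

section
/- A commutative monoid Q is integral (cancellative) if and only if Q is u-integral (m + u = m with u a unit implies u = 0) and the quotient Q/Q* of Q by its group of units is integral. -/
/-!
Cancellation descends to `Q/Q*` directly. Conversely, if `m + n = p + n` then `m` and `p` agree in
the cancellative quotient, so `p = m + u` for a unit `u`; then `(m + n) + u = m + n`, and
u-integrality forces `u = 0`.
-/

/-- The congruence on `M` identifying elements differing by a unit. -/
def unitCon (M : Type*) [AddCommMonoid M] : AddCon M :=
  { r := fun m n => ∃ u, IsAddUnit u ∧ m + u = n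
    iseqv := by
      refine ⟨fun m => ⟨0, isAddUnit_zero, add_zero m⟩, ?_, ?_⟩
      · rintro m n ⟨u, hu, rfl⟩
        obtain ⟨v, hv⟩ := hu.exists_neg
        exact ⟨v, ⟨⟨v, u, by rw [add_comm]; exact hv, hv⟩, rfl⟩, by rw [add_assoc, hv, add_zero]⟩
      · rintro m n p ⟨u, hu, rfl⟩ ⟨v, hv, rfl⟩
        exact ⟨u + v, hu.add hv, (add_assoc _ _ _).symm⟩
    add' := by
      rintro a b c d ⟨u, hu, rfl⟩ ⟨v, hv, rfl⟩
      exact ⟨u + v, hu.add hv, by abel⟩ }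

namespace unitCon

variable {M : Type*} [AddCommMonoid M]

theorem mk_eq_mk_iff {m n : M} :
    (m : (unitCon M).Quotient) = n ↔ ∃ u, IsAddUnit u ∧ m + u = n :=
  AddCon.eq _

instance isRightCancelAdd_quotient [IsRightCancelAdd M] :
    IsRightCancelAdd (unitCon M).Quotient := by
  refine ⟨fun c a b (hab : a + c = b + c) => ?_⟩
  induction a using AddCon.induction_on with | H m => ?_
  induction b using AddCon.induction_on with | H p => ?_
  induction c using AddCon.induction_on with | H n => ?_
  obtain ⟨u, hu, hsum⟩ :=
    mk_eq_mk_iff.mp (hab : ((m + n : M) : (unitCon M).Quotient) = ↑(p + n))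
  exact mk_eq_mk_iff.mpr ⟨u, hu, add_right_cancel (b := n) (by rwa [add_right_comm] at hsum)⟩

theorem isRightCancelAdd_of_quotient (h_unit : ∀ m u : M, IsAddUnit u → m + u = m → u = 0)
    [IsRightCancelAdd (unitCon M).Quotient] : IsRightCancelAdd M := by
  refine ⟨fun n m p (hmn : m + n = p + n) => ?_⟩
  have h_mk : (m : (unitCon M).Quotient) = p :=
    add_right_cancel (b := (n : (unitCon M).Quotient)) (congrArg _ hmn)
  obtain ⟨u, hu, rfl⟩ := mk_eq_mk_iff.mp h_mk
  have hu_zero : u = 0 := h_unit (m + n) u hu (by rw [add_right_comm]; exact hmn.symm)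
  rw [hu_zero, add_zero]

end unitCon

/-- A commutative monoid `Q` is integral iff it is u-integral and its sharp quotient
`Q/Q*` is integral. -/
theorem stmt5 {Q : Type*} [AddCommMonoid Q] :
    (∀ m n p : Q, m + n = p + n → m = p) ↔
      ((∀ m u : Q, IsAddUnit u → m + u = m → u = 0) ∧
        ∀ a b c : (unitCon Q).Quotient, a + c = b + c → a = b) := by
  constructor
  · intro h_cancel
    have : IsRightCancelAdd Q := ⟨fun n m p => h_cancel m n p⟩
    exact ⟨fun m u _ h => add_eq_right.mp ((add_comm u m).trans h),
      fun _ _ _ => add_right_cancel⟩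
  · rintro ⟨h_unit, h_quot⟩
    have : IsRightCancelAdd (unitCon Q).Quotient := ⟨fun c a b => h_quot a b c⟩
    have := unitCon.isRightCancelAdd_of_quotient h_unit
    exact fun _ _ _ => add_right_cancel
end

section
/- If Q is an integral (cancellative) commutative monoid and P ⊆ Q is a submonoid, then the natural map Q/P → Q^gp/P^gp is injective; in particular the quotient monoid Q/P is integral. -/
/-- The congruence on `M × M` defining the Grothendieck group of a commutative monoid. -/
def gpCon (M : Type*) [AddCommMonoid M] : AddCon (M × M) :=
  { r := fun a b => ∃ z, a.1 + b.2 + z = b.1 + a.2 + z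
    iseqv := by
      refine ⟨fun a => ⟨0, rfl⟩, ?_, ?_⟩
      · rintro a b ⟨z, hz⟩; exact ⟨z, hz.symm⟩
      · rintro a b c ⟨z, hz⟩ ⟨w, hw⟩
        refine ⟨b.1 + b.2 + z + w, ?_⟩
        calc a.1 + c.2 + (b.1 + b.2 + z + w)
            = (a.1 + b.2 + z) + (b.1 + c.2 + w) := by abel
          _ = (b.1 + a.2 + z) + (c.1 + b.2 + w) := by rw [hz, hw]
          _ = c.1 + a.2 + (b.1 + b.2 + z + w) := by abel
    add' := by
      rintro a b c d ⟨z, hz⟩ ⟨w, hw⟩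
      refine ⟨z + w, ?_⟩
      show a.1 + c.1 + (b.2 + d.2) + (z + w) = b.1 + d.1 + (a.2 + c.2) + (z + w)
      calc a.1 + c.1 + (b.2 + d.2) + (z + w)
          = (a.1 + b.2 + z) + (c.1 + d.2 + w) := by abel
        _ = (b.1 + a.2 + z) + (d.1 + c.2 + w) := by rw [hz, hw]
        _ = b.1 + d.1 + (a.2 + c.2) + (z + w) := by abel }

/-- The Grothendieck group of a commutative monoid. -/
abbrev GP (M : Type*) [AddCommMonoid M] := (gpCon M).Quotient

instance (M : Type*) [AddCommMonoid M] : Neg (GP M) :=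
  ⟨Quotient.map' (fun a : M × M => (a.2, a.1)) (by
    rintro a b ⟨z, hz⟩
    refine ⟨z, ?_⟩
    calc a.2 + b.1 + z = b.1 + a.2 + z := by abel
      _ = a.1 + b.2 + z := hz.symm
      _ = b.2 + a.1 + z := by abel)⟩

instance (M : Type*) [AddCommMonoid M] : AddCommGroup (GP M) :=
  { (inferInstance : AddCommMonoid (GP M)) with
    neg := Neg.neg
    zsmul := zsmulRec
    neg_add_cancel := by
      rintro ⟨a⟩
      exact Quotient.sound' ⟨0, by simp [add_comm]⟩ }

/-- The universal map from a commutative monoid to its Grothendieck group. -/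
def toGP (M : Type*) [AddCommMonoid M] : M →+ GP M :=
  { toFun := fun m => Quotient.mk'' (m, 0)
    map_zero' := rfl
    map_add' := fun a b => Quotient.sound' ⟨0, by simp⟩ }

/-- Functoriality of the Grothendieck group. -/
def gpMap {M N : Type*} [AddCommMonoid M] [AddCommMonoid N] (f : M →+ N) : GP M →+ GP N :=
  { toFun := Quotient.map' (fun a : M × M => (f a.1, f a.2)) (by
      rintro a b ⟨z, hz⟩
      exact ⟨f z, by simp only [← map_add, hz]⟩)
    map_zero' := Quotient.sound' ⟨0, by simp⟩
    map_add' := by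
      rintro ⟨a⟩ ⟨b⟩
      exact Quotient.sound' ⟨0, by simp⟩ }

/-- If `Q` is an integral commutative monoid and `P ⊆ Q` a submonoid, the natural map
`Q/P → Q^gp/P^gp` is injective (elements of `Q` equal mod `P^gp` in `Q^gp` are already
identified in the cokernel `Q/P`); in particular `Q/P` is integral. -/
theorem stmt6 {Q : Type*} [AddCommMonoid Q] (hQ : ∀ m n p : Q, m + n = p + n → m = p)
    (P : AddSubmonoid Q) :
    (∀ q q' : Q,
        toGP Q q - toGP Q q' ∈ AddSubgroup.closure (toGP Q '' (P : Set Q)) →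
        ∃ p ∈ P, ∃ p' ∈ P, q + p = q' + p') ∧
    (∀ a b c : Q, (∃ p ∈ P, ∃ p' ∈ P, a + c + p = b + c + p') →
        ∃ p ∈ P, ∃ p' ∈ P, a + p = b + p') := by
  have key : ∀ q q' : Q,
      toGP Q q - toGP Q q' ∈ AddSubgroup.closure (toGP Q '' (P : Set Q)) →
      ∃ p ∈ P, ∃ p' ∈ P, q + p = q' + p' := by
    intro q q' hmem
    have hform : ∃ p ∈ P, ∃ p' ∈ P,
        toGP Q q - toGP Q q' = toGP Q p - toGP Q p' := by
      refine AddSubgroup.closure_induction ?_ ?_ ?_ ?_ hmem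
      · rintro x ⟨p, hp, rfl⟩
        exact ⟨p, hp, 0, P.zero_mem, by simp⟩
      · exact ⟨0, P.zero_mem, 0, P.zero_mem, by simp⟩
      · rintro x y - - ⟨p1, hp1, p1', hp1', hx⟩ ⟨p2, hp2, p2', hp2', hy⟩
        refine ⟨p1 + p2, P.add_mem hp1 hp2, p1' + p2', P.add_mem hp1' hp2', ?_⟩
        rw [hx, hy, map_add, map_add]; abel
      · rintro x - ⟨p, hp, p', hp', hx⟩
        exact ⟨p', hp', p, hp, by rw [hx]; abel⟩
    obtain ⟨p, hp, p', hp', heq⟩ := hform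
    have heq2 : toGP Q (q + p') = toGP Q (q' + p) := by
      rw [map_add, map_add]
      have := sub_eq_sub_iff_add_eq_add.mp heq
      linear_combination (norm := abel) this
    obtain ⟨z, hz⟩ := Quotient.exact' heq2
    simp only [add_zero] at hz
    exact ⟨p', hp', p, hp, hQ _ z _ hz⟩
  refine ⟨key, ?_⟩
  intro a b c ⟨p, hp, p', hp', h⟩
  apply key
  have : toGP Q (a + c + p) = toGP Q (b + c + p') := by rw [h]
  simp only [map_add] at this
  have : toGP Q a - toGP Q b = toGP Q p' - toGP Q p := by
    linear_combination (norm := abel) this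
  rw [this]
  exact AddSubgroup.sub_mem _
    (AddSubgroup.subset_closure ⟨p', hp', rfl⟩)
    (AddSubgroup.subset_closure ⟨p, hp, rfl⟩)
end

section
/- The face of a commutative monoid Q generated by a subset S equals the set of all q ∈ Q such that q + q' ∈ P for some q' ∈ Q and some p in the submonoid P generated by S; equivalently, the face generated by a single element p is {q ∈ Q : q ≤ n·p for some n ∈ ℕ}, where q ≤ x means x = q + r for some r ∈ Q. -/
/-- An ideal of a commutative monoid: a subset stable under addition of monoid elements. -/
def IsIdeal {M : Type*} [AddCommMonoid M] (I : Set M) : Prop :=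
  ∀ a ∈ I, ∀ m : M, a + m ∈ I

/-- A prime ideal of a commutative monoid: a proper ideal `p` with
`a + b ∈ p → a ∈ p ∨ b ∈ p`. -/
def IsPrimeIdeal {M : Type*} [AddCommMonoid M] (I : Set M) : Prop :=
  IsIdeal I ∧ I ≠ Set.univ ∧ ∀ a b : M, a + b ∈ I → a ∈ I ∨ b ∈ I

/-- A face of a commutative monoid: a submonoid `F` with `a + b ∈ F → a ∈ F ∧ b ∈ F`. -/
def IsFace {M : Type*} [AddCommMonoid M] (F : Set M) : Prop :=
  ((0 : M) ∈ F ∧ ∀ a ∈ F, ∀ b ∈ F, a + b ∈ F) ∧ ∀ a b : M, a + b ∈ F → a ∈ F ∧ b ∈ F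

/-
A face is closed under addition and under taking summands, so every face containing `S`
contains the submonoid generated by `S` and all divisors of its elements. Conversely, the set of
these divisors is itself a face: it contains `0`, is closed under addition because the submonoid
is, and is closed under summands because a divisor of a divisor is a divisor.
-/

namespace IsFace

variable {M : Type*} [AddCommMonoid M] {F : Set M}

def toAddSubmonoid (hF : IsFace F) : AddSubmonoid M where
  carrier := F
  zero_mem' := hF.1.1
  add_mem' ha hb := hF.1.2 _ ha _ hb

lemma closure_subset (hF : IsFace F) {S : Set M} (hS : S ⊆ F) :
    (AddSubmonoid.closure S : Set M) ⊆ F :=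
  AddSubmonoid.closure_le (S := hF.toAddSubmonoid) |>.2 hS

lemma mem_of_add_mem_left (hF : IsFace F) {a b : M} (h : a + b ∈ F) : a ∈ F :=
  (hF.2 a b h).1

end IsFace

section FaceGeneratedBy

variable {M : Type*} [AddCommMonoid M]

lemma isFace_setOf_add_eq_mem_closure (S : Set M) :
    IsFace {q : M | ∃ p ∈ AddSubmonoid.closure S, ∃ q' : M, q + q' = p} := by
  refine ⟨⟨⟨0, zero_mem _, 0, add_zero 0⟩, ?_⟩, ?_⟩
  · rintro a ⟨p₁, hp₁, a', rfl⟩ b ⟨p₂, hp₂, b', rfl⟩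
    exact ⟨_, add_mem hp₁ hp₂, a' + b', add_add_add_comm a b a' b'⟩
  · rintro a b ⟨p, hp, q', rfl⟩
    exact ⟨⟨_, hp, b + q', (add_assoc a b q').symm⟩,
      ⟨_, hp, a + q', by rw [add_left_comm, ← add_assoc]⟩⟩

lemma sInter_isFace_supset_eq (S : Set M) :
    ⋂₀ {F : Set M | IsFace F ∧ S ⊆ F} =
      {q : M | ∃ p ∈ AddSubmonoid.closure S, ∃ q' : M, q + q' = p} := by
  refine subset_antisymm (Set.sInter_subset_of_mem ⟨isFace_setOf_add_eq_mem_closure S, ?_⟩) ?_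
  · exact fun s hs => ⟨s, AddSubmonoid.subset_closure hs, 0, add_zero s⟩
  · rintro q ⟨p, hp, q', rfl⟩ F ⟨hF, hSF⟩
    exact hF.mem_of_add_mem_left (hF.closure_subset hSF hp)

lemma sInter_isFace_mem_eq (p : M) :
    ⋂₀ {F : Set M | IsFace F ∧ p ∈ F} = {q : M | ∃ n : ℕ, ∃ r : M, q + r = n • p} := by
  simpa only [Set.singleton_subset_iff, AddSubmonoid.mem_closure_singleton, exists_exists_eq_and]
    using sInter_isFace_supset_eq ({p} : Set M)

end FaceGeneratedBy

/-- The face of a commutative monoid `Q` generated by a subset `S` is the set of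
`q ∈ Q` dividing some element of the submonoid generated by `S`; in particular the
face generated by a single element `p` is `{q | q ≤ n • p for some n ∈ ℕ}`. -/
theorem stmt14 {Q : Type*} [AddCommMonoid Q] :
    (∀ S : Set Q, ⋂₀ {F : Set Q | IsFace F ∧ S ⊆ F} =
      {q : Q | ∃ p ∈ AddSubmonoid.closure S, ∃ q' : Q, q + q' = p}) ∧
    (∀ p : Q, ⋂₀ {F : Set Q | IsFace F ∧ p ∈ F} =
      {q : Q | ∃ n : ℕ, ∃ r : Q, q + r = n • p}) :=
  ⟨sInter_isFace_supset_eq, sInter_isFace_mem_eq⟩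
end
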